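/- arXiv:2503.20329 — 6 statements merged into one kernel-verified Lean document; each statement's English description precedes it below -/
import Mathlib

section
/- Let G be a connected finite simple graph and let A be a minimal edge cut of G with |A| = 2. Let G_1 and G_2 be the two connected components of G − A. Then y_G = y_{G_1} + y_{G_2} − 1. -/
/-!
Each edge of a minimal edge cut `A` joins the two sides of `G - A`. Hence for any edge set `B`,
adding the edges of `A` missing from `B` raises `c(G - B)` by at least one and `|B|` by at most
`|A| = 2`, so `y_G` is attained on some `B ⊇ A`, where `y_G(B) = y_{G - A}(B \ A) - 2`. Finally
`G - A` is the disjoint union of `G₁` and `G₂`; components and edges add up over the two sides,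
which gives `y_{G - A} = y_{G₁} + y_{G₂} + 1`.
-/

open SimpleGraph

/-- The number of connected components of a graph. -/
noncomputable def numComp {V : Type*} (G : SimpleGraph V) : ℕ :=
  Nat.card G.ConnectedComponent

/-- `y_G(A) = 2 c(G - A) - |A| - 1`. -/
noncomputable def yVal {V : Type*} (G : SimpleGraph V) (A : Set (Sym2 V)) : ℤ :=
  2 * (numComp (G.deleteEdges A) : ℤ) - (A.ncard : ℤ) - 1

/-- `y_G = max_{A ⊆ E(G)} y_G(A)`. -/
noncomputable def yMax {V : Type*} (G : SimpleGraph V) : ℤ :=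
  sSup { y : ℤ | ∃ A ⊆ G.edgeSet, yVal G A = y }

section

variable {V : Type*}

namespace SimpleGraph

variable {G H : SimpleGraph V}

theorem Reachable.apply_eq_of_forall_adj {β : Sort*} {f : V → β}
    (hf : ∀ u v, G.Adj u v → f u = f v) {u v : V} (h : G.Reachable u v) : f u = f v := by
  obtain ⟨p⟩ := h
  induction p with
  | nil => rfl
  | cons hadj _ ih => exact (hf _ _ hadj).trans ih

theorem Reachable.of_forall_adj_reachable (hGH : ∀ u v, G.Adj u v → H.Reachable u v) {u v : V}
    (h : G.Reachable u v) : H.Reachable u v :=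
  ConnectedComponent.exact <| h.apply_eq_of_forall_adj fun a b hab =>
    ConnectedComponent.sound (hGH a b hab)

theorem adj_and_not_reachable_of_preconnected_deleteEdges_diff {A : Set (Sym2 V)} {u v : V}
    (hA : ¬(G.deleteEdges A).Preconnected)
    (hmin : (G.deleteEdges (A \ {s(u, v)})).Preconnected) :
    G.Adj u v ∧ ¬(G.deleteEdges A).Reachable u v := by
  by_contra! h
  refine hA fun x y => (hmin x y).of_forall_adj_reachable fun a b hab => ?_
  rw [deleteEdges_adj, Set.mem_sdiff, Set.mem_singleton_iff, not_and_not_right] at hab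
  by_cases hmem : s(a, b) ∈ A
  · rcases Sym2.eq_iff.mp (hab.2 hmem) with ⟨rfl, rfl⟩ | ⟨rfl, rfl⟩
    · exact h hab.1
    · exact (h hab.1.symm).symm
  · exact Adj.reachable (deleteEdges_adj.mpr ⟨hab.1, hmem⟩)

theorem edgeSet_induce (S : Set V) : (G.induce S).edgeSet = Sym2.map (↑) ⁻¹' G.edgeSet := by
  ext e
  induction e using Sym2.ind
  rfl

theorem induce_deleteEdges (S : Set V) (B : Set (Sym2 V)) :
    (G.deleteEdges B).induce S = (G.induce S).deleteEdges (Sym2.map (↑) ⁻¹' B) := by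
  ext x y
  simp

end SimpleGraph

theorem Set.range_sym2Map_subtypeVal (S : Set V) :
    Set.range (Sym2.map ((↑) : S → V)) = S.sym2 := by
  rw [← Set.image_univ, ← Set.sym2_univ, ← Set.sym2_image, Set.image_univ, Subtype.range_coe]

theorem Set.ncard_preimage_sym2Map_subtypeVal (S : Set V) (B : Set (Sym2 V)) :
    (Sym2.map ((↑) : S → V) ⁻¹' B).ncard = (B ∩ S.sym2).ncard := by
  rw [← Set.range_sym2Map_subtypeVal, ← Set.image_preimage_eq_inter_range,
    Set.ncard_image_of_injective _ (Sym2.map.injective Subtype.val_injective)]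

theorem Set.preimage_sym2Map_subtypeVal_image_eq_empty {S T : Set V} (hST : Disjoint S T)
    (B : Set (Sym2 T)) :
    Sym2.map ((↑) : S → V) ⁻¹' (Sym2.map ((↑) : T → V) '' B) = ∅ := by
  have hT : ((↑) : S → V) ⁻¹' T = ∅ :=
    Subtype.preimage_coe_eq_empty.mpr (Set.disjoint_iff_inter_eq_empty.mp hST)
  refine Set.subset_empty_iff.mp ?_
  calc _ ⊆ Sym2.map ((↑) : S → V) ⁻¹' Set.range (Sym2.map ((↑) : T → V)) :=
        Set.preimage_mono (Set.image_subset_range _ _)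
    _ = ∅ := by rw [Set.range_sym2Map_subtypeVal, ← Set.sym2_preimage, hT, Set.sym2_empty]

section Components

variable (H : SimpleGraph V) (S : Set V)

open scoped Classical in
noncomputable def componentOfSide (v : V) :
    (H.induce S).ConnectedComponent ⊕ (H.induce Sᶜ).ConnectedComponent :=
  if h : v ∈ S then .inl ((H.induce S).connectedComponentMk ⟨v, h⟩)
  else .inr ((H.induce Sᶜ).connectedComponentMk ⟨v, h⟩)

variable {H S}

theorem componentOfSide_of_mem {v : V} (h : v ∈ S) :
    componentOfSide H S v = .inl ((H.induce S).connectedComponentMk ⟨v, h⟩) :=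
  dif_pos h

theorem componentOfSide_of_notMem {v : V} (h : v ∉ S) :
    componentOfSide H S v = .inr ((H.induce Sᶜ).connectedComponentMk ⟨v, h⟩) :=
  dif_neg h

theorem componentOfSide_eq_of_adj (hS : ∀ u v, H.Adj u v → (u ∈ S ↔ v ∈ S)) {u v : V}
    (huv : H.Adj u v) : componentOfSide H S u = componentOfSide H S v := by
  by_cases hu : u ∈ S
  · have hv : v ∈ S := (hS u v huv).mp hu
    have hadj : (H.induce S).Adj ⟨u, hu⟩ ⟨v, hv⟩ := huv
    rw [componentOfSide_of_mem hu, componentOfSide_of_mem hv,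
      ConnectedComponent.connectedComponentMk_eq_of_adj hadj]
  · have hv : v ∉ S := fun hv => hu ((hS u v huv).mpr hv)
    have hadj : (H.induce Sᶜ).Adj ⟨u, hu⟩ ⟨v, hv⟩ := huv
    rw [componentOfSide_of_notMem hu, componentOfSide_of_notMem hv,
      ConnectedComponent.connectedComponentMk_eq_of_adj hadj]

noncomputable def connectedComponentEquivSum (hS : ∀ u v, H.Adj u v → (u ∈ S ↔ v ∈ S)) :
    H.ConnectedComponent ≃
      (H.induce S).ConnectedComponent ⊕ (H.induce Sᶜ).ConnectedComponent where
  toFun := Quot.lift (componentOfSide H S) fun _ _ h =>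
    h.apply_eq_of_forall_adj fun _ _ => componentOfSide_eq_of_adj hS
  invFun := Sum.elim (.map (Embedding.induce S).toHom) (.map (Embedding.induce Sᶜ).toHom)
  left_inv := by
    refine ConnectedComponent.ind fun v => ?_
    show Sum.elim _ _ (componentOfSide H S v) = _
    by_cases h : v ∈ S
    · rw [componentOfSide_of_mem h]; rfl
    · rw [componentOfSide_of_notMem h]; rfl
  right_inv := by
    rintro (c | c) <;> refine c.ind fun x => ?_
    · exact componentOfSide_of_mem x.2
    · exact componentOfSide_of_notMem x.2

theorem numComp_eq_add_of_forall_adj [Finite V]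
    (hS : ∀ u v, H.Adj u v → (u ∈ S ↔ v ∈ S)) :
    numComp H = numComp (H.induce S) + numComp (H.induce Sᶜ) := by
  rw [numComp, Nat.card_congr (connectedComponentEquivSum hS), Nat.card_sum]
  rfl

end Components

theorem numComp_lt_of_not_reachable [Finite V] {H H' : SimpleGraph V} (hle : H ≤ H') {u v : V}
    (hr' : H'.Reachable u v) (hr : ¬H.Reachable u v) : numComp H' < numComp H := by
  have hsurj := ConnectedComponent.surjective_map_ofLE hle
  refine (Nat.card_le_card_of_surjective _ hsurj).lt_of_ne fun hcard => hr ?_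
  have hinj := ((Nat.bijective_iff_surjective_and_card _).mpr ⟨hsurj, hcard.symm⟩).injective
  exact ConnectedComponent.exact (hinj (ConnectedComponent.sound hr'))

section yMax

variable [Finite V] {G : SimpleGraph V}

theorem le_yMax {B : Set (Sym2 V)} (hB : B ⊆ G.edgeSet) : yVal G B ≤ yMax G := by
  have hbdd : BddAbove {y : ℤ | ∃ A ⊆ G.edgeSet, yVal G A = y} :=
    (Set.finite_range (yVal G)).bddAbove.mono (by rintro _ ⟨B, -, rfl⟩; exact ⟨B, rfl⟩)
  exact le_csSup hbdd ⟨B, hB, rfl⟩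

theorem yMax_le_iff {m : ℤ} : yMax G ≤ m ↔ ∀ B ⊆ G.edgeSet, yVal G B ≤ m := by
  refine ⟨fun h B hB => (le_yMax hB).trans h, fun h => ?_⟩
  refine csSup_le ⟨_, ∅, Set.empty_subset _, rfl⟩ ?_
  rintro _ ⟨B, hB, rfl⟩
  exact h B hB

theorem yVal_union_eq_yVal_deleteEdges_sub {A B : Set (Sym2 V)} (hAB : Disjoint A B) :
    yVal G (A ∪ B) = yVal (G.deleteEdges A) B - A.ncard := by
  rw [yVal, yVal, deleteEdges_deleteEdges, Set.ncard_union_eq hAB]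
  push_cast
  ring

theorem yVal_le_yVal_union_of_card_le_two {A : Set (Sym2 V)} (hA : A ⊆ G.edgeSet)
    (hsep : ∀ u v, s(u, v) ∈ A → ¬(G.deleteEdges A).Reachable u v) (hcard : A.ncard ≤ 2)
    (B : Set (Sym2 V)) : yVal G B ≤ yVal G (A ∪ B) := by
  by_cases hAB : A ⊆ B
  · rw [Set.union_eq_right.mpr hAB]
  obtain ⟨e, heA, heB⟩ := Set.not_subset.mp hAB
  induction e using Sym2.ind with | h u v => ?_
  have hlt : numComp (G.deleteEdges B) < numComp (G.deleteEdges (A ∪ B)) :=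
    numComp_lt_of_not_reachable (deleteEdges_anti Set.subset_union_right)
      (Adj.reachable (deleteEdges_adj.mpr ⟨hA heA, heB⟩))
      fun h => hsep u v heA (h.mono (deleteEdges_anti Set.subset_union_left))
  have hunion : (A ∪ B).ncard ≤ A.ncard + B.ncard := Set.ncard_union_le A B
  rw [yVal, yVal]
  omega

theorem yMax_eq_yMax_deleteEdges_sub_of_card_le_two {A : Set (Sym2 V)} (hA : A ⊆ G.edgeSet)
    (hsep : ∀ u v, s(u, v) ∈ A → ¬(G.deleteEdges A).Reachable u v) (hcard : A.ncard ≤ 2) :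
    yMax G = yMax (G.deleteEdges A) - A.ncard := by
  refine le_antisymm (yMax_le_iff.mpr fun B hB => ?_) (sub_le_iff_le_add.mpr ?_)
  · calc yVal G B ≤ yVal G (A ∪ B) := yVal_le_yVal_union_of_card_le_two hA hsep hcard B
      _ = yVal G (A ∪ (B \ A)) := by rw [Set.union_sdiff_self]
      _ = yVal (G.deleteEdges A) (B \ A) - A.ncard :=
        yVal_union_eq_yVal_deleteEdges_sub Set.disjoint_sdiff_right
      _ ≤ yMax (G.deleteEdges A) - A.ncard := by
        gcongr
        exact le_yMax (edgeSet_deleteEdges A ▸ Set.sdiff_subset_sdiff_left hB)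
  · refine yMax_le_iff.mpr fun B hB => ?_
    rw [edgeSet_deleteEdges] at hB
    have hAB : Disjoint A B := Set.disjoint_of_subset_right hB Set.disjoint_sdiff_right
    have := le_yMax (G := G) (Set.union_subset hA (hB.trans Set.sdiff_subset))
    rw [yVal_union_eq_yVal_deleteEdges_sub hAB] at this
    linarith

end yMax

section DisjointSides

variable [Finite V] {H : SimpleGraph V} {S : Set V}

theorem ncard_eq_ncard_preimage_add_ncard_preimage
    (hS : ∀ u v, H.Adj u v → (u ∈ S ↔ v ∈ S)) {B : Set (Sym2 V)} (hB : B ⊆ H.edgeSet) :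
    B.ncard = (Sym2.map ((↑) : S → V) ⁻¹' B).ncard
      + (Sym2.map ((↑) : ↥Sᶜ → V) ⁻¹' B).ncard := by
  have hsplit : B ∩ Sᶜ.sym2 = B \ S.sym2 := by
    ext e
    induction e using Sym2.ind with | h u v => ?_
    have hiff : s(u, v) ∈ B → (u ∈ S ↔ v ∈ S) := fun h => hS u v (hB h)
    simp only [Set.mem_inter_iff, Set.mem_sdiff, Set.mk_mem_sym2_iff, Set.mem_compl_iff]
    tauto
  rw [Set.ncard_preimage_sym2Map_subtypeVal, Set.ncard_preimage_sym2Map_subtypeVal, hsplit,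
    Set.ncard_inter_add_ncard_sdiff_eq_ncard]

theorem yVal_eq_yVal_induce_add_yVal_induce_compl_add_one
    (hS : ∀ u v, H.Adj u v → (u ∈ S ↔ v ∈ S)) {B : Set (Sym2 V)} (hB : B ⊆ H.edgeSet) :
    yVal H B = yVal (H.induce S) (Sym2.map (↑) ⁻¹' B)
      + yVal (H.induce Sᶜ) (Sym2.map (↑) ⁻¹' B) + 1 := by
  have hcomp := numComp_eq_add_of_forall_adj (H := H.deleteEdges B) (S := S)
    fun u v huv => hS u v (deleteEdges_le B huv)
  rw [induce_deleteEdges, induce_deleteEdges] at hcomp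
  rw [yVal, yVal, yVal, hcomp, ncard_eq_ncard_preimage_add_ncard_preimage hS hB]
  push_cast
  ring

theorem yVal_induce_add_yVal_induce_compl_add_one_le_yMax
    (hS : ∀ u v, H.Adj u v → (u ∈ S ↔ v ∈ S))
    {B₁ : Set (Sym2 S)} {B₂ : Set (Sym2 ↥Sᶜ)}
    (hB₁ : B₁ ⊆ (H.induce S).edgeSet) (hB₂ : B₂ ⊆ (H.induce Sᶜ).edgeSet) :
    yVal (H.induce S) B₁ + yVal (H.induce Sᶜ) B₂ + 1 ≤ yMax H := by
  set B := Sym2.map ((↑) : S → V) '' B₁ ∪ Sym2.map ((↑) : ↥Sᶜ → V) '' B₂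
  have hB : B ⊆ H.edgeSet := by
    rw [edgeSet_induce] at hB₁ hB₂
    exact Set.union_subset (Set.image_subset_iff.mpr hB₁) (Set.image_subset_iff.mpr hB₂)
  have hval := yVal_eq_yVal_induce_add_yVal_induce_compl_add_one hS hB
  rw [Set.preimage_union, Set.preimage_union,
    Set.preimage_image_eq _ (Sym2.map.injective Subtype.val_injective),
    Set.preimage_image_eq _ (Sym2.map.injective Subtype.val_injective),
    Set.preimage_sym2Map_subtypeVal_image_eq_empty disjoint_compl_right,
    Set.preimage_sym2Map_subtypeVal_image_eq_empty disjoint_compl_left,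
    Set.union_empty, Set.empty_union] at hval
  exact hval ▸ le_yMax hB

theorem yMax_eq_yMax_induce_add_yMax_induce_compl_add_one
    (hS : ∀ u v, H.Adj u v → (u ∈ S ↔ v ∈ S)) :
    yMax H = yMax (H.induce S) + yMax (H.induce Sᶜ) + 1 := by
  refine le_antisymm (yMax_le_iff.mpr fun B hB => ?_) ?_
  · rw [yVal_eq_yVal_induce_add_yVal_induce_compl_add_one hS hB]
    gcongr <;> exact le_yMax (edgeSet_induce _ ▸ Set.preimage_mono hB)
  · have h₁ : yMax (H.induce S) ≤ yMax H - yMax (H.induce Sᶜ) - 1 :=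
      yMax_le_iff.mpr fun B₁ hB₁ => by
        have : yMax (H.induce Sᶜ) ≤ yMax H - yVal (H.induce S) B₁ - 1 :=
          yMax_le_iff.mpr fun B₂ hB₂ => by
            linarith [yVal_induce_add_yVal_induce_compl_add_one_le_yMax hS hB₁ hB₂]
        linarith
    linarith

end DisjointSides

end

theorem yMax_eq_add_sub_one_of_minimal_edgeCut_card_two_general {V : Type*} [Finite V]
    (G : SimpleGraph V)
    (A : Set (Sym2 V))
    (hmin : ∀ A' ⊂ A, (G.deleteEdges A').Connected)
    (hcard : A.ncard = 2)
    (c₁ c₂ : (G.deleteEdges A).ConnectedComponent) (hne : c₁ ≠ c₂)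
    (htwo : ∀ c : (G.deleteEdges A).ConnectedComponent, c = c₁ ∨ c = c₂) :
    yMax G = yMax ((G.deleteEdges A).induce c₁.supp)
      + yMax ((G.deleteEdges A).induce c₂.supp) - 1 := by
  have hdisc : ¬(G.deleteEdges A).Preconnected := fun h =>
    hne (h.subsingleton_connectedComponent.elim c₁ c₂)
  have hcut : ∀ u v, s(u, v) ∈ A → G.Adj u v ∧ ¬(G.deleteEdges A).Reachable u v :=
    fun u v he => adj_and_not_reachable_of_preconnected_deleteEdges_diff hdisc
      (hmin _ (Set.sdiff_singleton_ssubset.mpr he)).preconnected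
  have hA : A ⊆ G.edgeSet := fun e he => by
    induction e using Sym2.ind with | h u v => exact (hcut u v he).1
  have hsupp : c₂.supp = c₁.suppᶜ := by
    ext v
    rcases htwo ((G.deleteEdges A).connectedComponentMk v) with h | h <;>
      simp [ConnectedComponent.mem_supp_iff, h, hne, hne.symm]
  rw [hsupp, yMax_eq_yMax_deleteEdges_sub_of_card_le_two hA (fun u v he => (hcut u v he).2)
    hcard.le, yMax_eq_yMax_induce_add_yMax_induce_compl_add_one fun u v => c₁.mem_supp_congr_adj,
    hcard]
  ring

/-- If `A` is a minimal edge cut of a connected finite simple graph `G` with `|A| = 2`,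
and `G₁`, `G₂` are the two connected components of `G - A`, then
`y_G = y_{G₁} + y_{G₂} - 1`. -/
theorem yMax_eq_add_sub_one_of_minimal_edgeCut_card_two {V : Type*} [Finite V]
    (G : SimpleGraph V) (hG : G.Connected)
    (A : Set (Sym2 V)) (hA : A ⊆ G.edgeSet)
    (hdisc : ¬ (G.deleteEdges A).Connected)
    (hmin : ∀ A' ⊂ A, (G.deleteEdges A').Connected)
    (hcard : A.ncard = 2)
    (c₁ c₂ : (G.deleteEdges A).ConnectedComponent) (hne : c₁ ≠ c₂)
    (htwo : ∀ c : (G.deleteEdges A).ConnectedComponent, c = c₁ ∨ c = c₂) :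
    yMax G = yMax ((G.deleteEdges A).induce c₁.supp)
      + yMax ((G.deleteEdges A).induce c₂.supp) - 1 :=
  yMax_eq_add_sub_one_of_minimal_edgeCut_card_two_general G A hmin hcard c₁ c₂ hne htwo
end

section
/- Let G be a connected finite simple graph and A ⊆ E(G) an edge subset with y_G = y_G(A). For any k ≥ 2 distinct connected components F_1, F_2, …, F_k of G − A, the set E(F_1, …, F_k) of edges of G joining vertices lying in two distinct components among F_1, …, F_k satisfies |E(F_1, …, F_k)| ≤ 2k − 2; in particular, |E(F_i, F_j)| ≤ 2 for all 1 ≤ i < j ≤ k. -/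
/-!
Let `B` be the set of edges of `G` joining two distinct components among `F₁, …, F_k`; all of
them lie in `A`. Putting `B` back into the graph, i.e. passing from `G - A` to `G - (A \ B)`,
leaves every other component of `G - A` intact and merges `F₁, …, F_k` into at least one
component, so `c(G - (A \ B)) ≥ c(G - A) - (k - 1)`. Maximality of `y_G(A)` gives
`y_G(A \ B) ≤ y_G(A)`, that is `|B| ≤ 2 (c(G - A) - c(G - (A \ B))) ≤ 2k - 2`.
The bound for a pair of components is the case `k = 2`.
-/

open SimpleGraph

lemma Nat.card_le_card_add_ncard_sub_one {α β : Type*} [Finite α] [Finite β] (φ : α → β)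
    (S : Set α) (h : ∀ a b, φ a = φ b → a ∉ S → a = b) :
    Nat.card α ≤ Nat.card β + (S.ncard - 1) := by
  have hinj : Set.InjOn φ Sᶜ := fun a ha b _ hab => h a b hab ha
  have hdisj : Disjoint (φ '' Sᶜ) (φ '' S) := by
    refine Set.disjoint_left.mpr ?_
    rintro _ ⟨a, ha, rfl⟩ ⟨b, hb, hba⟩
    exact ha (h a b hba.symm ha ▸ hb)
  have himage : S.ncard ≤ (φ '' S).ncard + (S.ncard - 1) := by
    rcases S.eq_empty_or_nonempty with rfl | hS
    · simp
    · have := (hS.image φ).ncard_pos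
      omega
  have hβ := Set.ncard_le_card (φ '' Sᶜ ∪ φ '' S)
  rw [Set.ncard_union_eq hdisj, hinj.ncard_image] at hβ
  have hα := Set.ncard_add_ncard_compl S
  omega

section CrossEdges

variable {V : Type*} {G : SimpleGraph V} {A : Set (Sym2 V)}
  {𝒞 : Set (G.deleteEdges A).ConnectedComponent}

variable (G A 𝒞) in
/-- The paper's `E(F₁, …, F_k)` for `𝒞 = {F₁, …, F_k}`. -/
def crossEdges : Set (Sym2 V) :=
  {e | ∃ C ∈ 𝒞, ∃ D ∈ 𝒞, C ≠ D ∧ ∃ u ∈ C.supp, ∃ v ∈ D.supp, G.Adj u v ∧ e = s(u, v)}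

lemma crossEdges_subset : crossEdges G A 𝒞 ⊆ A := by
  rintro _ ⟨C, -, D, -, hCD, u, hu, v, hv, huv, rfl⟩
  by_contra he
  rw [ConnectedComponent.mem_supp_iff] at hu hv
  exact hCD (hu ▸ hv ▸ ConnectedComponent.eq.mpr (deleteEdges_adj.mpr ⟨huv, he⟩).reachable)

lemma connectedComponentMk_eq_of_adj_of_notMem {u v : V}
    (huv : (G.deleteEdges (A \ crossEdges G A 𝒞)).Adj u v)
    (hu : (G.deleteEdges A).connectedComponentMk u ∉ 𝒞) :
    (G.deleteEdges A).connectedComponentMk u = (G.deleteEdges A).connectedComponentMk v := by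
  obtain ⟨huv, hnotMem⟩ := deleteEdges_adj.mp huv
  by_cases he : s(u, v) ∈ A
  · have hcross : s(u, v) ∈ crossEdges G A 𝒞 := by
      by_contra hcross
      exact hnotMem ⟨he, hcross⟩
    obtain ⟨C, hC, D, hD, -, a, ha, b, hb, -, hab⟩ := hcross
    rw [ConnectedComponent.mem_supp_iff] at ha hb
    rcases Sym2.eq_iff.mp hab with ⟨rfl, -⟩ | ⟨rfl, -⟩
    · exact absurd (ha ▸ hC) hu
    · exact absurd (hb ▸ hD) hu
  · exact ConnectedComponent.eq.mpr (deleteEdges_adj.mpr ⟨huv, he⟩).reachable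

lemma connectedComponentMk_eq_of_reachable_of_notMem {u v : V}
    (huv : (G.deleteEdges (A \ crossEdges G A 𝒞)).Reachable u v)
    (hu : (G.deleteEdges A).connectedComponentMk u ∉ 𝒞) :
    (G.deleteEdges A).connectedComponentMk u = (G.deleteEdges A).connectedComponentMk v := by
  obtain ⟨p⟩ := huv
  induction p with
  | nil => rfl
  | cons hadj _ ih =>
    have hstep := connectedComponentMk_eq_of_adj_of_notMem hadj hu
    exact hstep.trans (ih (hstep ▸ hu))

lemma numComp_le_numComp_diff_crossEdges [Finite V] :
    numComp (G.deleteEdges A) ≤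
      numComp (G.deleteEdges (A \ crossEdges G A 𝒞)) + (𝒞.ncard - 1) := by
  refine Nat.card_le_card_add_ncard_sub_one
    (ConnectedComponent.map (Hom.ofLE (deleteEdges_anti Set.sdiff_subset))) 𝒞 ?_
  intro C D
  refine ConnectedComponent.ind₂ (fun u v hmap hu => ?_) C D
  simp only [ConnectedComponent.map_mk, Hom.coe_ofLE, id] at hmap
  exact connectedComponentMk_eq_of_reachable_of_notMem (ConnectedComponent.eq.mp hmap) hu

end CrossEdges

lemma numComp_le_card {V : Type*} [Finite V] (G : SimpleGraph V) : numComp G ≤ Nat.card V :=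
  Nat.card_le_card_of_surjective G.connectedComponentMk fun C => C.exists_rep

lemma yVal_le_yMax {V : Type*} [Finite V] {G : SimpleGraph V} {A : Set (Sym2 V)}
    (hA : A ⊆ G.edgeSet) : yVal G A ≤ yMax G := by
  refine le_csSup ⟨2 * Nat.card V, ?_⟩ ⟨A, hA, rfl⟩
  rintro _ ⟨A₀, -, rfl⟩
  have := numComp_le_card (G.deleteEdges A₀)
  unfold yVal
  omega

lemma crossEdges_ncard_le_of_yMax_eq {V : Type*} [Finite V] {G : SimpleGraph V}
    {A : Set (Sym2 V)} (hA : A ⊆ G.edgeSet) (hy : yMax G = yVal G A)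
    (𝒞 : Set (G.deleteEdges A).ConnectedComponent) :
    (crossEdges G A 𝒞).ncard ≤ 2 * 𝒞.ncard - 2 := by
  have hmax : yVal G (A \ crossEdges G A 𝒞) ≤ yVal G A :=
    hy ▸ yVal_le_yMax (Set.sdiff_subset.trans hA)
  have hsplit := Set.ncard_sdiff_add_ncard_of_subset (crossEdges_subset (𝒞 := 𝒞)) A.toFinite
  have hcount := numComp_le_numComp_diff_crossEdges (𝒞 := 𝒞)
  unfold yVal at hmax
  omega

theorem crossEdges_card_le_of_yMax_attained_general {V : Type*} [Finite V]
    (G : SimpleGraph V)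
    (A : Set (Sym2 V)) (hA : A ⊆ G.edgeSet) (hy : yMax G = yVal G A)
    (k : ℕ)
    (F : Fin k → (G.deleteEdges A).ConnectedComponent) (hF : Function.Injective F) :
    ({e : Sym2 V | ∃ i j : Fin k, i ≠ j ∧
        ∃ u ∈ (F i).supp, ∃ v ∈ (F j).supp, G.Adj u v ∧ e = s(u, v)}.ncard ≤ 2 * k - 2) ∧
    ∀ i j : Fin k, i ≠ j →
      ({e : Sym2 V | ∃ u ∈ (F i).supp, ∃ v ∈ (F j).supp,
          G.Adj u v ∧ e = s(u, v)}.ncard ≤ 2) := by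
  have hcross := crossEdges_ncard_le_of_yMax_eq hA hy
  refine ⟨?_, fun i j hij => ?_⟩
  · calc _ ≤ (crossEdges G A (Set.range F)).ncard := by
          refine Set.ncard_le_ncard ?_ (Set.toFinite _)
          rintro _ ⟨i, j, hij, hedge⟩
          exact ⟨F i, ⟨i, rfl⟩, F j, ⟨j, rfl⟩, hF.ne hij, hedge⟩
      _ ≤ 2 * k - 2 := by simpa [Set.ncard_range_of_injective hF] using hcross (Set.range F)
  · calc _ ≤ (crossEdges G A {F i, F j}).ncard := by
          refine Set.ncard_le_ncard ?_ (Set.toFinite _)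
          rintro _ hedge
          exact ⟨F i, .inl rfl, F j, .inr rfl, hF.ne hij, hedge⟩
      _ ≤ 2 := by simpa [Set.ncard_pair (hF.ne hij)] using hcross {F i, F j}

/-- If `A` attains `y_G`, then for any `k ≥ 2` distinct components `F₁, …, F_k` of `G - A`,
the set of edges of `G` joining distinct components satisfies `|E(F₁, …, F_k)| ≤ 2k - 2`;
in particular `|E(F_i, F_j)| ≤ 2` for `i ≠ j`. -/
theorem crossEdges_card_le_of_yMax_attained {V : Type*} [Finite V]
    (G : SimpleGraph V) (hG : G.Connected)
    (A : Set (Sym2 V)) (hA : A ⊆ G.edgeSet) (hy : yMax G = yVal G A)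
    (k : ℕ) (hk : 2 ≤ k)
    (F : Fin k → (G.deleteEdges A).ConnectedComponent) (hF : Function.Injective F) :
    ({e : Sym2 V | ∃ i j : Fin k, i ≠ j ∧
        ∃ u ∈ (F i).supp, ∃ v ∈ (F j).supp, G.Adj u v ∧ e = s(u, v)}.ncard ≤ 2 * k - 2) ∧
    ∀ i j : Fin k, i ≠ j →
      ({e : Sym2 V | ∃ u ∈ (F i).supp, ∃ v ∈ (F j).supp,
          G.Adj u v ∧ e = s(u, v)}.ncard ≤ 2) :=
  crossEdges_card_le_of_yMax_attained_general G A hA hy k F hF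
end

section
/- Let G be a connected finite simple graph (i.e., 1-edge-connected) and let A be an edge subset of minimum cardinality among those satisfying y_G(A) = y_G, where y_G ≥ 2. Then y_G ≤ c(G − A). -/
open SimpleGraph

/-!
Deleting a single edge raises the number of components by at most one, so for a connected
graph `c(G - A) ≤ |A| + 1`, which is exactly the inequality `2 c(G - A) - |A| - 1 ≤ c(G - A)`.
-/

namespace SimpleGraph

variable {V : Type*} {G : SimpleGraph V}

/-- Follow the walk until it first crosses `s(u, v)`. -/
lemma Walk.reachable_deleteEdges_singleton_or (u v : V) {x y : V} (p : G.Walk x y) :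
    (G.deleteEdges {s(u, v)}).Reachable x y ∨ (G.deleteEdges {s(u, v)}).Reachable x u ∨
      (G.deleteEdges {s(u, v)}).Reachable x v := by
  induction p with
  | nil => exact Or.inl .rfl
  | @cons a b c hab _ ih =>
    by_cases he : s(a, b) = s(u, v)
    · rcases Sym2.eq_iff.mp he with ⟨rfl, -⟩ | ⟨rfl, -⟩
      · exact Or.inr (Or.inl .rfl)
      · exact Or.inr (Or.inr .rfl)
    · have hab' : (G.deleteEdges {s(u, v)}).Reachable a b :=
        ((deleteEdges_adj ..).mpr ⟨hab, he⟩).reachable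
      exact ih.imp hab'.trans (Or.imp hab'.trans hab'.trans)

lemma Reachable.reachable_deleteEdges_singleton {u v x y : V} (h : G.Reachable x y)
    (hx : ¬(G.deleteEdges {s(u, v)}).Reachable x u)
    (hy : ¬(G.deleteEdges {s(u, v)}).Reachable y u) :
    (G.deleteEdges {s(u, v)}).Reachable x y := by
  obtain ⟨p⟩ := h
  rcases p.reachable_deleteEdges_singleton_or u v with hxy | hxu | hxv
  · exact hxy
  · exact absurd hxu hx
  rcases p.reverse.reachable_deleteEdges_singleton_or u v with hyx | hyu | hyv
  · exact hyx.symm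
  · exact absurd hyu hy
  · exact hxv.trans hyv.symm

lemma numComp_deleteEdges_singleton_le [Finite V] (G : SimpleGraph V) (e : Sym2 V) :
    numComp (G.deleteEdges {e}) ≤ numComp G + 1 := by
  classical
  induction e using Sym2.ind with | _ u v =>
  set H := G.deleteEdges {s(u, v)}
  -- Away from the component of `u`, the components of `H` map injectively to those of `G`.
  let f : H.ConnectedComponent → Option G.ConnectedComponent := fun c =>
    if c = H.connectedComponentMk u then none else some (c.map (.ofLE (deleteEdges_le _)))
  have hf : Function.Injective f := by
    intro c d hcd
    induction c using ConnectedComponent.ind with | _ x =>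
    induction d using ConnectedComponent.ind with | _ y =>
    by_cases hx : H.connectedComponentMk x = H.connectedComponentMk u <;>
      by_cases hy : H.connectedComponentMk y = H.connectedComponentMk u
    · rw [hx, hy]
    · simp [f, hx, hy] at hcd
    · simp [f, hx, hy] at hcd
    · simp only [f, if_neg hx, if_neg hy, Option.some_inj] at hcd
      exact ConnectedComponent.sound <|
        (ConnectedComponent.exact hcd).reachable_deleteEdges_singleton
          (mt ConnectedComponent.sound hx) (mt ConnectedComponent.sound hy)
  calc numComp H ≤ Nat.card (Option G.ConnectedComponent) := Nat.card_le_card_of_injective f hf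
    _ = numComp G + 1 := Finite.card_option

lemma numComp_deleteEdges_le [Finite V] (G : SimpleGraph V) (A : Set (Sym2 V)) :
    numComp (G.deleteEdges A) ≤ numComp G + A.ncard := by
  induction A, A.toFinite using Set.Finite.induction_on with
  | empty => simp
  | @insert e s hes hs ih =>
    rw [Set.ncard_insert_of_notMem hes hs, ← Set.union_singleton, ← deleteEdges_deleteEdges]
    have := numComp_deleteEdges_singleton_le (G.deleteEdges s) e
    omega

lemma Connected.numComp_eq_one (hG : G.Connected) : numComp G = 1 :=
  Nat.card_eq_one_iff_unique.mpr
    ⟨hG.preconnected.subsingleton_connectedComponent, hG.nonempty.map G.connectedComponentMk⟩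

lemma yVal_le_numComp_deleteEdges [Finite V] (G : SimpleGraph V) (A : Set (Sym2 V)) :
    yVal G A ≤ numComp (G.deleteEdges A) + numComp G - 1 := by
  have := numComp_deleteEdges_le G A
  rw [yVal]
  omega

end SimpleGraph

theorem yMax_le_numComp_of_connected_general {V : Type*} [Finite V]
    (G : SimpleGraph V) (hG : G.Connected)
    (A : Set (Sym2 V)) (hy : yMax G = yVal G A) :
    yMax G ≤ (numComp (G.deleteEdges A) : ℤ) := by
  have h := G.yVal_le_numComp_deleteEdges A
  rw [hG.numComp_eq_one] at h
  rw [hy]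
  omega

/-- If `G` is connected and `A` is a smallest edge subset with `y_G(A) = y_G ≥ 2`,
then `y_G ≤ c(G - A)`. -/
theorem yMax_le_numComp_of_connected {V : Type*} [Finite V]
    (G : SimpleGraph V) (hG : G.Connected)
    (A : Set (Sym2 V)) (hA : A ⊆ G.edgeSet) (hy : yMax G = yVal G A)
    (hmin : ∀ B ⊆ G.edgeSet, yMax G = yVal G B → A.ncard ≤ B.ncard)
    (h2 : 2 ≤ yMax G) :
    yMax G ≤ (numComp (G.deleteEdges A) : ℤ) :=
  yMax_le_numComp_of_connected_general G hG A hy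
end

section
/- Let G be a 3-edge-connected finite simple graph and let A be an edge subset of minimum cardinality among those satisfying y_G(A) = y_G, where y_G ≥ 2. Then y_G ≤ ⌊c(G − A)/2⌋ − 1. -/
open SimpleGraph

/-- A finite simple graph is `k`-edge-connected if it has at least two vertices and removing
fewer than `k` edges leaves it connected. -/
def EdgeConnected {V : Type*} (G : SimpleGraph V) (k : ℕ) : Prop :=
  1 < Nat.card V ∧ ∀ A ⊆ G.edgeSet, A.ncard < k → (G.deleteEdges A).Connected

/-
Let `G - A` have `c` components; `y_G ≥ 2` forces `c ≥ 2`. The edges of `A` leaving a component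
separate it from the rest of `G`, so 3-edge-connectivity puts at least three edges of `A` on the
boundary of every component. Each edge lies on at most two boundaries, so double counting gives
`3c ≤ 2|A|`, whence `y_G = 2c - |A| - 1 ≤ 2c - ⌈3c/2⌉ - 1 = ⌊c/2⌋ - 1`.
-/

section

variable {V : Type*}

def edgeBoundary (A : Set (Sym2 V)) (S : Set V) : Set (Sym2 V) :=
  {e ∈ A | ∃ u ∈ S, ∃ v ∉ S, e = s(u, v)}

theorem mem_or_mem_of_mem_edgeBoundary {A : Set (Sym2 V)} {S : Set V} {a b : V}
    (h : s(a, b) ∈ edgeBoundary A S) : a ∈ S ∨ b ∈ S := by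
  obtain ⟨-, u, hu, v, -, huv⟩ := h
  rcases Sym2.eq_iff.1 huv with ⟨rfl, -⟩ | ⟨-, rfl⟩
  · exact Or.inl hu
  · exact Or.inr hu

variable {G : SimpleGraph V} {A : Set (Sym2 V)}

theorem SimpleGraph.not_reachable_deleteEdges_edgeBoundary
    (K : (G.deleteEdges A).ConnectedComponent) {u w : V} (hu : u ∈ K.supp) (hw : w ∉ K.supp) :
    ¬ (G.deleteEdges (edgeBoundary A K.supp)).Reachable u w := by
  rintro ⟨p⟩
  obtain ⟨d, -, hd, hd'⟩ := p.exists_boundary_dart K.supp hu hw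
  obtain ⟨hG, hB⟩ := deleteEdges_adj.1 d.adj
  have hnA : s(d.fst, d.snd) ∉ A := fun hA => hB ⟨hA, d.fst, hd, d.snd, hd', rfl⟩
  exact hd' ((K.mem_supp_congr_adj (deleteEdges_adj.2 ⟨hG, hnA⟩)).1 hd)

namespace EdgeConnected

variable {k : ℕ}

theorem le_ncard_edgeBoundary (hG : EdgeConnected G k) (hA : A ⊆ G.edgeSet)
    (K : (G.deleteEdges A).ConnectedComponent) {w : V} (hw : w ∉ K.supp) :
    k ≤ (edgeBoundary A K.supp).ncard := by
  by_contra! hlt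
  obtain ⟨u, hu⟩ := K.nonempty_supp
  exact G.not_reachable_deleteEdges_edgeBoundary K hu hw
    ((hG.2 _ ((Set.sep_subset _ _).trans hA) hlt).preconnected u w)

theorem numComp_deleteEdges_mul_le [Finite V] (hG : EdgeConnected G k) (hA : A ⊆ G.edgeSet)
    (hc : 1 < numComp (G.deleteEdges A)) : numComp (G.deleteEdges A) * k ≤ A.ncard * 2 := by
  classical
  have := Fintype.ofFinite V
  have := Fintype.ofFinite (G.deleteEdges A).ConnectedComponent
  rw [numComp, Nat.card_eq_fintype_card] at hc ⊢
  rw [Set.ncard_eq_toFinset_card']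
  refine Finset.card_mul_le_card_mul (fun K e => e ∈ edgeBoundary A K.supp)
    (fun K _ => ?_) (fun e _ => ?_)
  · obtain ⟨K', hK'⟩ := Fintype.exists_ne_of_one_lt_card hc K
    obtain ⟨w, rfl⟩ := K'.nonempty_supp
    have hbound : edgeBoundary A K.supp = ↑(Finset.bipartiteAbove
        (fun K e => e ∈ edgeBoundary A K.supp) A.toFinset K) := by
      ext e
      simp [Finset.bipartiteAbove, edgeBoundary]
    rw [← Set.ncard_coe_finset, ← hbound]
    exact hG.le_ncard_edgeBoundary hA K hK'
  · induction e using Sym2.ind with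
    | _ a b =>
      refine (Finset.card_le_card (t := {(G.deleteEdges A).connectedComponentMk a,
        (G.deleteEdges A).connectedComponentMk b}) fun K hK => ?_).trans Finset.card_le_two
      rcases mem_or_mem_of_mem_edgeBoundary (Finset.mem_filter.1 hK).2 with ha | hb
      · exact Finset.mem_insert.2 (Or.inl ha.symm)
      · exact Finset.mem_insert_of_mem (Finset.mem_singleton.2 hb.symm)

end EdgeConnected

end

theorem yMax_le_of_three_edgeConnected_general {V : Type*} [Finite V]
    (G : SimpleGraph V) (hG : EdgeConnected G 3)
    (A : Set (Sym2 V)) (hA : A ⊆ G.edgeSet) (hy : yMax G = yVal G A)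
    (h2 : 2 ≤ yMax G) :
    yMax G ≤ ((numComp (G.deleteEdges A) / 2 : ℕ) : ℤ) - 1 := by
  rw [hy, yVal] at h2 ⊢
  have := hG.numComp_deleteEdges_mul_le hA (by omega)
  omega

/-- If `G` is 3-edge-connected and `A` is a smallest edge subset with `y_G(A) = y_G ≥ 2`,
then `y_G ≤ ⌊c(G - A)/2⌋ - 1`. -/
theorem yMax_le_of_three_edgeConnected {V : Type*} [Finite V]
    (G : SimpleGraph V) (hG : EdgeConnected G 3)
    (A : Set (Sym2 V)) (hA : A ⊆ G.edgeSet) (hy : yMax G = yVal G A)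
    (hmin : ∀ B ⊆ G.edgeSet, yMax G = yVal G B → A.ncard ≤ B.ncard)
    (h2 : 2 ≤ yMax G) :
    yMax G ≤ ((numComp (G.deleteEdges A) / 2 : ℕ) : ℤ) - 1 :=
  yMax_le_of_three_edgeConnected_general G hG A hA hy h2
end

section
/- If G is a 2-edge-connected finite simple graph of order n that is not a complete graph, then y_G ≤ min{n − 1, 3·χ(G^c) − 1}, where G^c is the complement of G and χ denotes the chromatic number. -/
open SimpleGraph

/-!
Let `A` be a set of edges and `c` the number of components of `G - A`.

Since `G` is 2-edge-connected, when `c ≥ 2` every component sends at least two edges of `G`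
to the rest of the graph, all of them in `A`, and each edge of `A` leaves at most two components;
hence `c ≤ |A|`, and together with `c ≤ n` this gives `2c ≤ n + |A|`.

A colouring of `Gᶜ` with `k` colours partitions `V` into `k` cliques of `G`. If a colour class
meets `t` components of `G - A`, the `t.choose 2` edges of `G` joining representatives of those
components all lie in `A`; as `2t ≤ t.choose 2 + 3`, summing over the colours gives
`2c ≤ 3k + |A|`.
-/

open Finset

theorem Nat.two_mul_le_choose_two_add_three (t : ℕ) : 2 * t ≤ t.choose 2 + 3 := by
  induction t with
  | zero => simp
  | succ t ih =>
    have hsucc : (t + 1).choose 2 = t.choose 1 + t.choose 2 := Nat.choose_succ_succ' t 1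
    rw [hsucc, Nat.choose_one_right]
    rcases Nat.lt_or_ge t 2 with ht | ht
    · interval_cases t <;> simp
    · omega

namespace SimpleGraph

variable {V : Type*} (G : SimpleGraph V)

def edgeCut (S : Set V) : Set (Sym2 V) :=
  {e | ∃ u ∈ S, ∃ v ∉ S, G.Adj u v ∧ e = s(u, v)}

theorem edgeCut_subset_edgeSet (S : Set V) : G.edgeCut S ⊆ G.edgeSet := by
  rintro _ ⟨u, -, v, -, huv, rfl⟩
  exact huv

theorem EdgeConnected.two_le_ncard_edgeCut {G : SimpleGraph V} (hG : EdgeConnected G 2)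
    {S : Set V} {u v : V} (hu : u ∈ S) (hv : v ∉ S) : 2 ≤ (G.edgeCut S).ncard := by
  by_contra! hcut
  obtain ⟨p⟩ := (hG.2 _ (G.edgeCut_subset_edgeSet S) hcut).preconnected u v
  obtain ⟨d, -, hd₁, hd₂⟩ := p.exists_boundary_dart S hu hv
  have hd := d.adj
  rw [deleteEdges_adj] at hd
  exact hd.2 ⟨_, hd₁, _, hd₂, hd.1, rfl⟩

theorem mk_mem_of_adj_of_connectedComponentMk_ne {A : Set (Sym2 V)} {u v : V} (huv : G.Adj u v)
    (hne : (G.deleteEdges A).connectedComponentMk u ≠ (G.deleteEdges A).connectedComponentMk v) :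
    s(u, v) ∈ A := by
  by_contra hA
  exact hne <| ConnectedComponent.sound <| Adj.reachable <| (deleteEdges_adj ..).2 ⟨huv, hA⟩

theorem edgeCut_supp_subset {A : Set (Sym2 V)} (c : (G.deleteEdges A).ConnectedComponent) :
    G.edgeCut c.supp ⊆ A := by
  rintro _ ⟨u, hu, v, hv, huv, rfl⟩
  rw [ConnectedComponent.mem_supp_iff] at hu hv
  exact G.mk_mem_of_adj_of_connectedComponentMk_ne huv (hu ▸ Ne.symm hv)

theorem numComp_le_card [Finite V] : numComp G ≤ Nat.card V :=
  Nat.card_le_card_of_surjective _ fun c => c.exists_rep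

theorem numComp_deleteEdges_le_ncard [Finite V] (A : Set (Sym2 V))
    (hcut : ∀ c : (G.deleteEdges A).ConnectedComponent, 2 ≤ (G.edgeCut c.supp).ncard) :
    numComp (G.deleteEdges A) ≤ A.ncard := by
  classical
  have := Fintype.ofFinite V
  let r (c : (G.deleteEdges A).ConnectedComponent) (e : Sym2 V) : Prop := e ∈ G.edgeCut c.supp
  have key := card_mul_le_card_mul r (s := univ) (t := A.toFinset) (m := 2) (n := 2)
    (fun c _ => ?_) (fun e _ => ?_)
  · rw [numComp, Nat.card_eq_fintype_card, ← card_univ, Set.ncard_eq_toFinset_card']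
    omega
  · have hsub : G.edgeCut c.supp ⊆ ↑(A.toFinset.bipartiteAbove r c) := fun e he => by
      simpa [bipartiteAbove, r] using ⟨G.edgeCut_supp_subset c he, he⟩
    exact (hcut c).trans <| (Set.ncard_le_ncard hsub).trans (Set.ncard_coe_finset _).le
  · induction e using Sym2.ind with
    | _ u v =>
      let q := (G.deleteEdges A).connectedComponentMk
      refine (card_le_card (t := {q u, q v}) fun c hc => ?_).trans card_le_two
      obtain ⟨a, ha, b, -, -, hab⟩ := (mem_bipartiteBelow _).1 hc |>.2
      rw [ConnectedComponent.mem_supp_iff] at ha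
      rcases Sym2.eq_iff.1 hab with ⟨rfl, rfl⟩ | ⟨rfl, rfl⟩ <;> simp [q, ha]

theorem two_mul_numComp_deleteEdges_le [Finite V] (hG : EdgeConnected G 2) (A : Set (Sym2 V)) :
    2 * numComp (G.deleteEdges A) ≤ Nat.card V + A.ncard := by
  have hcomp := (G.deleteEdges A).numComp_le_card
  rcases Nat.lt_or_ge (numComp (G.deleteEdges A)) 2 with hlt | hge
  · have := hG.1
    omega
  · suffices numComp (G.deleteEdges A) ≤ A.ncard by omega
    refine G.numComp_deleteEdges_le_ncard A fun c => ?_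
    have : Nontrivial (G.deleteEdges A).ConnectedComponent :=
      Finite.one_lt_card_iff_nontrivial.1 hge
    obtain ⟨c', hc'⟩ := exists_ne c
    obtain ⟨u, rfl⟩ := c.exists_rep
    obtain ⟨v, rfl⟩ := c'.exists_rep
    exact hG.two_le_ncard_edgeCut (S := (G.deleteEdges A).connectedComponentMk u |>.supp)
      rfl hc'

variable {G} in
theorem IsClique.choose_two_card_image_connectedComponentMk_le [DecidableEq V] {S : Finset V}
    (hS : G.IsClique (S : Set V)) (A : Set (Sym2 V)) [DecidablePred (· ∈ A)]
    [DecidableEq (G.deleteEdges A).ConnectedComponent] :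
    (#(S.image (G.deleteEdges A).connectedComponentMk)).choose 2 ≤ #{e ∈ S.sym2 | e ∈ A} := by
  obtain ⟨R, hRS, hinj, himg⟩ := exists_subset_injOn_image_eq_of_surjOn (S : Set V)
    (S.image (G.deleteEdges A).connectedComponentMk) (by rw [coe_image]; exact Set.surjOn_image ..)
  rw [← himg, card_image_of_injOn hinj, ← Sym2.card_image_offDiag]
  refine card_le_card fun e he => ?_
  obtain ⟨⟨u, v⟩, huv, rfl⟩ := mem_image.1 he
  obtain ⟨hu, hv, hne⟩ := mem_offDiag.1 huv
  rw [mem_filter, Function.uncurry_apply_pair, Finset.mk_mem_sym2_iff]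
  exact ⟨⟨hRS hu, hRS hv⟩,
    G.mk_mem_of_adj_of_connectedComponentMk_ne (hS (hRS hu) (hRS hv) hne) (hinj.ne hu hv hne)⟩

theorem two_mul_numComp_deleteEdges_le_three_mul_card_add [Fintype V] {ι : Type*} [Fintype ι]
    (C : Gᶜ.Coloring ι) (A : Set (Sym2 V)) :
    2 * numComp (G.deleteEdges A) ≤ 3 * Fintype.card ι + A.ncard := by
  classical
  let S : ι → Finset V := fun i => (C.colorClass i).toFinset
  let T : ι → Finset (G.deleteEdges A).ConnectedComponent := fun i =>
    (S i).image (G.deleteEdges A).connectedComponentMk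
  have hmemS (i : ι) (v : V) : v ∈ S i ↔ C v = i := Set.mem_toFinset
  have hclique (i : ι) : G.IsClique (S i : Set V) := by
    rw [Set.coe_toFinset, ← isIndepSet_compl]
    exact C.isIndepSet_colorClass i
  have hcover : numComp (G.deleteEdges A) ≤ ∑ i, #(T i) := by
    rw [numComp, Nat.card_eq_fintype_card, ← card_univ]
    refine (card_le_card fun c _ => ?_).trans card_biUnion_le
    obtain ⟨v, rfl⟩ := c.exists_rep
    exact mem_biUnion.2 ⟨C v, mem_univ _, mem_image_of_mem _ ((hmemS _ v).2 rfl)⟩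
  have hdisjoint : ∑ i, #{e ∈ (S i).sym2 | e ∈ A} ≤ A.ncard := by
    rw [← card_biUnion, Set.ncard_eq_toFinset_card']
    · refine card_le_card fun e he => ?_
      obtain ⟨i, -, he⟩ := mem_biUnion.1 he
      exact Set.mem_toFinset.2 (mem_filter.1 he).2
    · intro i _ j _ hij
      rw [Function.onFun]
      refine Finset.disjoint_left.2 fun e hi hj => ?_
      induction e using Sym2.ind with
      | _ u v =>
        simp only [mem_filter, Finset.mk_mem_sym2_iff, hmemS] at hi hj
        exact hij (hi.1.1.symm.trans hj.1.1)
  calc 2 * numComp (G.deleteEdges A) ≤ ∑ i, 2 * #(T i) := by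
        rw [← mul_sum]; exact Nat.mul_le_mul_left 2 hcover
    _ ≤ ∑ i, (#{e ∈ (S i).sym2 | e ∈ A} + 3) := sum_le_sum fun i _ =>
        (Nat.two_mul_le_choose_two_add_three _).trans
          (Nat.add_le_add_right ((hclique i).choose_two_card_image_connectedComponentMk_le A) 3)
    _ ≤ 3 * Fintype.card ι + A.ncard := by
        rw [sum_add_distrib, sum_const, card_univ, smul_eq_mul]; omega

end SimpleGraph

theorem yMax_le {V : Type*} (G : SimpleGraph V) {b : ℤ}
    (h : ∀ A : Set (Sym2 V), yVal G A ≤ b) : yMax G ≤ b :=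
  csSup_le ⟨_, ∅, Set.empty_subset _, rfl⟩ (by rintro _ ⟨A, -, rfl⟩; exact h A)

theorem yMax_le_of_two_edgeConnected_not_complete_general {V : Type*} [Finite V]
    (G : SimpleGraph V) (hG : EdgeConnected G 2)
    (n : ℕ) (hn : Nat.card V = n) :
    yMax G ≤ (n : ℤ) - 1 ∧ yMax G ≤ 3 * ((Gᶜ).chromaticNumber.toNat : ℤ) - 1 := by
  have := Fintype.ofFinite V
  obtain ⟨C⟩ := Gᶜ.colorable_chromaticNumber_of_fintype
  constructor <;> refine yMax_le G fun A => ?_ <;> unfold yVal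
  · have := G.two_mul_numComp_deleteEdges_le hG A
    omega
  · have := G.two_mul_numComp_deleteEdges_le_three_mul_card_add C A
    rw [Fintype.card_fin] at this
    omega

/-- If `G` is a 2-edge-connected finite simple graph of order `n` that is not complete,
then `y_G ≤ min {n - 1, 3 χ(Gᶜ) - 1}`. -/
theorem yMax_le_of_two_edgeConnected_not_complete {V : Type*} [Finite V]
    (G : SimpleGraph V) (hG : EdgeConnected G 2) (hnc : G ≠ ⊤)
    (n : ℕ) (hn : Nat.card V = n) :
    yMax G ≤ (n : ℤ) - 1 ∧ yMax G ≤ 3 * ((Gᶜ).chromaticNumber.toNat : ℤ) - 1 :=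
  yMax_le_of_two_edgeConnected_not_complete_general G hG n hn
end

section
/- If G is a 3-edge-connected finite simple graph of order n that is not a complete graph, then y_G ≤ min{⌊n/2⌋ − 1, ⌊3·χ(G^c)/2⌋ − 1}, where G^c is the complement of G and χ denotes the chromatic number. -/
open SimpleGraph

/-
Fix `A` and let `c` be the number of components of `G - A`. Every nonempty proper union of
components is left by at least three edges, all of them in `A`; counting darts, `3c ≤ 2|A|`,
whence `y_G(A) ≤ c/2 - 1 ≤ n/2 - 1`. For the second bound colour `Gᶜ` with `k = χ(Gᶜ)` colours
and give each component the colour of a representative. Components of one colour have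
representatives pairwise adjacent in `G`, so a class of `w` components sends `w(w-1)` darts
inside the class and at least three out of it, and `w(w-1) + 3 ≥ 4w - 3`; summing over the
classes, `4c ≤ 2|A| + 3k`. For `c = 1` one needs `n ≥ 4` (minimum degree at least three) and
`k ≥ 2` (`G` is not complete).
-/

open Finset

section Arcs

variable {α κ : Type*} [Fintype α] [DecidableEq κ] (s t : α → κ)

lemma four_mul_le_mul_self_sub_add_six (w : ℕ) : 4 * w ≤ w * w - w + 6 := by
  rcases le_or_gt w 2 with hw | hw
  · interval_cases w <;> norm_num
  · have : 3 * w ≤ w * w := Nat.mul_le_mul_right w hw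
    zify [Nat.le_mul_self w]
    nlinarith

lemma card_offDiag_add_card_leaving_le (W : Finset κ)
    (hW : ∀ C ∈ W, ∀ C' ∈ W, C ≠ C' → ∃ a, s a = C ∧ t a = C') :
    #W.offDiag + #{a | s a ∈ W ∧ t a ∉ W} ≤ #{a | s a ∈ W ∧ s a ≠ t a} := by
  rw [← card_filter_add_card_filter_not (s := {a | s a ∈ W ∧ s a ≠ t a}) (p := fun a => t a ∈ W)]
  refine Nat.add_le_add ?_ ?_
  · refine card_le_card_of_surjOn (fun a => (s a, t a)) ?_
    rintro ⟨C, C'⟩ hCC'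
    obtain ⟨hC, hC', hne⟩ := mem_offDiag.mp hCC'
    obtain ⟨a, rfl, rfl⟩ := hW C hC C' hC' hne
    exact ⟨a, by simp [hC, hC', hne], rfl⟩
  · refine card_le_card fun a => ?_
    simp only [mem_filter, mem_univ, true_and]
    exact fun ⟨hs, ht⟩ => ⟨⟨hs, fun h => ht (h ▸ hs)⟩, ht⟩

variable {s t}

lemma three_mul_card_le_card_filter_ne [Fintype κ] [Nontrivial κ]
    (hcut : ∀ S : Finset κ, S.Nonempty → S ≠ univ → 3 ≤ #{a | s a ∈ S ∧ t a ∉ S}) :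
    3 * Fintype.card κ ≤ #{a | s a ≠ t a} := by
  rw [card_eq_sum_card_fiberwise (f := s) (t := univ) (fun _ _ => mem_univ _), ← card_univ,
    mul_comm, ← smul_eq_mul, ← sum_const]
  refine sum_le_sum fun C _ => ?_
  have hC : {C} ≠ univ := by
    obtain ⟨C', hC'⟩ := exists_ne C
    exact fun h => hC' (mem_singleton.mp (h ▸ mem_univ C'))
  refine (hcut {C} (singleton_nonempty C) hC).trans_eq (congrArg card ?_)
  ext a
  simp only [mem_filter, mem_univ, true_and, mem_singleton]
  constructor
  · rintro ⟨rfl, hne⟩; exact ⟨Ne.symm hne, rfl⟩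
  · rintro ⟨hne, rfl⟩; exact ⟨rfl, hne.symm⟩

lemma four_mul_card_le_of_clique [Fintype κ] (W : Finset κ) (hWu : W ≠ univ)
    (hcut : ∀ S : Finset κ, S.Nonempty → S ≠ univ → 3 ≤ #{a | s a ∈ S ∧ t a ∉ S})
    (hW : ∀ C ∈ W, ∀ C' ∈ W, C ≠ C' → ∃ a, s a = C ∧ t a = C') :
    4 * #W ≤ #{a | s a ∈ W ∧ s a ≠ t a} + 3 := by
  rcases W.eq_empty_or_nonempty with rfl | hWn
  · simp
  have hin := card_offDiag_add_card_leaving_le s t W hW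
  have hout := hcut W hWn hWu
  rw [offDiag_card] at hin
  have := four_mul_le_mul_self_sub_add_six #W
  omega

theorem four_mul_card_le_card_filter_ne [Fintype κ] {k : ℕ} (hk : 2 ≤ k) (h : κ → Fin k)
    (hcut : ∀ S : Finset κ, S.Nonempty → S ≠ univ → 3 ≤ #{a | s a ∈ S ∧ t a ∉ S})
    (hclique : ∀ C C', C ≠ C' → h C = h C' → ∃ a, s a = C ∧ t a = C') :
    4 * Fintype.card κ ≤ #{a | s a ≠ t a} + 3 * k := by
  by_cases hall : ∃ j, ∀ C, h C = j
  -- a single colour class has no leaving darts; `2 ≤ k` makes up for them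
  · obtain ⟨j, hj⟩ := hall
    have := card_offDiag_add_card_leaving_le s t univ
      fun C _ C' _ hne => hclique C C' hne ((hj C).trans (hj C').symm)
    simp only [mem_univ, not_true_eq_false, and_false, filter_false, card_empty, add_zero,
      true_and, offDiag_card, card_univ] at this
    have := four_mul_le_mul_self_sub_add_six (Fintype.card κ)
    omega
  push Not at hall
  have hclass : ∀ j, 4 * #{C | h C = j} ≤ #{a | s a ≠ t a ∧ h (s a) = j} + 3 := by
    intro j
    obtain ⟨C, hC⟩ := hall j
    have hWu : ({C | h C = j} : Finset κ) ≠ univ := fun hu =>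
      hC (by simpa using eq_univ_iff_forall.mp hu C)
    convert four_mul_card_le_of_clique _ hWu hcut
      (fun C hC C' hC' hne => hclique C C' hne (by simp_all)) using 3
    simp [and_comm]
  calc 4 * Fintype.card κ = ∑ j, 4 * #{C | h C = j} := by
        rw [← mul_sum, ← card_univ, card_eq_sum_card_fiberwise (f := h) (fun _ _ => mem_univ _)]
    _ ≤ ∑ j : Fin k, (#{a | s a ≠ t a ∧ h (s a) = j} + 3) := sum_le_sum fun j _ => hclass j
    _ = #{a | s a ≠ t a} + 3 * k := by
        rw [sum_add_distrib, card_eq_sum_card_fiberwise (f := fun a => h (s a)) (t := univ)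
          (fun _ _ => mem_univ _)]
        simp [filter_filter, mul_comm]

end Arcs

section Darts

variable {V : Type*} [Fintype V] {G : SimpleGraph V} [DecidableRel G.Adj]

lemma EdgeConnected.le_card_darts_leaving {k : ℕ} (hG : EdgeConnected G k) (P : V → Prop)
    [DecidablePred P] {u w : V} (hu : P u) (hw : ¬ P w) :
    k ≤ #{d : G.Dart | P d.fst ∧ ¬ P d.snd} := by
  classical
  set B : Set (Sym2 V) := ↑(({d : G.Dart | P d.fst ∧ ¬ P d.snd} : Finset G.Dart).image Dart.edge)
  have hB : B ⊆ G.edgeSet := by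
    intro e he
    obtain ⟨d, -, rfl⟩ := mem_image.mp he
    exact d.edge_mem
  have hdisc : ¬ (G.deleteEdges B).Connected := by
    intro hcon
    obtain ⟨d, -, hd, hd'⟩ := (hcon.preconnected u w).some.exists_boundary_dart {v | P v} hu hw
    obtain ⟨hadj, hnB⟩ := deleteEdges_adj.mp d.adj
    exact hnB (mem_image.mpr ⟨⟨d.toProd, hadj⟩, by simpa using ⟨hd, hd'⟩, rfl⟩)
  calc k ≤ B.ncard := not_lt.mp fun hlt => hdisc (hG.2 B hB hlt)
    _ ≤ _ := by rw [Set.ncard_coe_finset]; exact card_image_le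

lemma EdgeConnected.le_degree {k : ℕ} (hG : EdgeConnected G k) (v : V) : k ≤ G.degree v := by
  classical
  have := Finite.one_lt_card_iff_nontrivial.mp hG.1
  obtain ⟨w, hw⟩ := exists_ne v
  calc k ≤ #{d : G.Dart | d.fst = v ∧ ¬ d.snd = v} := hG.le_card_darts_leaving (· = v) rfl hw
    _ ≤ #{d : G.Dart | d.fst = v} := card_le_card (monotone_filter_right _ fun _ _ => And.left)
    _ = G.degree v := dart_fst_fiber_card_eq_degree G v

lemma EdgeConnected.le_card_darts_leaving_of_surjective {k : ℕ} (hG : EdgeConnected G k)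
    {κ : Type*} [Fintype κ] [DecidableEq κ] {f : V → κ} (hf : Function.Surjective f)
    (S : Finset κ) (hS : S.Nonempty) (hSu : S ≠ univ) :
    k ≤ #{d : G.Dart | f d.fst ∈ S ∧ f d.snd ∉ S} := by
  obtain ⟨C, hC⟩ := hS
  obtain ⟨C', hC'⟩ := not_forall.mp fun h => hSu (eq_univ_iff_forall.mpr h)
  obtain ⟨u, rfl⟩ := hf C
  obtain ⟨w, rfl⟩ := hf C'
  exact hG.le_card_darts_leaving (f · ∈ S) hC hC'

lemma card_darts_crossing_le (A : Set (Sym2 V))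
    [DecidableEq (G.deleteEdges A).ConnectedComponent] :
    #{d : G.Dart | (G.deleteEdges A).connectedComponentMk d.fst ≠
      (G.deleteEdges A).connectedComponentMk d.snd} ≤ 2 * A.ncard := by
  classical
  have hmaps : ∀ d ∈ ({d : G.Dart | (G.deleteEdges A).connectedComponentMk d.fst ≠
      (G.deleteEdges A).connectedComponentMk d.snd} : Finset _), d.edge ∈ A.toFinset := by
    intro d hd
    rw [Set.mem_toFinset]
    by_contra he
    exact (mem_filter.mp hd).2
      (ConnectedComponent.sound (deleteEdges_adj.mpr ⟨d.adj, he⟩).reachable)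
  calc _ ≤ 2 * #A.toFinset := card_le_mul_card_image_of_maps_to hmaps 2 fun e _ => by
        refine (card_le_card (filter_subset_filter _ (subset_univ _))).trans ?_
        by_cases he : e ∈ G.edgeSet
        · exact (dart_edge_fiber_card G e he).le
        · rw [filter_false_of_mem fun d _ (h : d.edge = e) => he (h ▸ d.edge_mem)]
          exact Nat.zero_le _
    _ = 2 * A.ncard := by rw [Set.ncard_eq_toFinset_card']

end Darts

lemma SimpleGraph.Coloring.adj_of_compl_of_eq {V α : Type*} {G : SimpleGraph V}
    (col : Gᶜ.Coloring α) {u v : V} (huv : u ≠ v) (h : col u = col v) : G.Adj u v :=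
  not_not.mp fun hnadj => col.valid ⟨huv, hnadj⟩ h

section Components

variable {V : Type*} [Finite V] {G : SimpleGraph V}

lemma EdgeConnected.lt_card {k : ℕ} (hG : EdgeConnected G k) : k < Nat.card V := by
  classical
  have := Fintype.ofFinite V
  have := Finite.one_lt_card_iff_nontrivial.mp hG.1
  obtain ⟨v⟩ := Nontrivial.to_nonempty (α := V)
  rw [Nat.card_eq_fintype_card]
  exact (hG.le_degree v).trans_lt (G.degree_lt_card_verts v)

lemma three_mul_numComp_deleteEdges_le (hG : EdgeConnected G 3) (A : Set (Sym2 V))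
    (hA : 2 ≤ numComp (G.deleteEdges A)) :
    3 * numComp (G.deleteEdges A) ≤ 2 * A.ncard := by
  classical
  have := Fintype.ofFinite V
  have := Fintype.ofFinite (G.deleteEdges A).ConnectedComponent
  have := Finite.one_lt_card_iff_nontrivial.mp hA
  have hf : Function.Surjective (G.deleteEdges A).connectedComponentMk :=
    fun C => C.exists_rep
  rw [numComp, Nat.card_eq_fintype_card]
  exact (three_mul_card_le_card_filter_ne
    (hG.le_card_darts_leaving_of_surjective hf)).trans (card_darts_crossing_le A)

lemma four_mul_numComp_deleteEdges_le (hG : EdgeConnected G 3) (A : Set (Sym2 V)) {k : ℕ}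
    (hk : 2 ≤ k) (hcol : Gᶜ.Colorable k) :
    4 * numComp (G.deleteEdges A) ≤ 2 * A.ncard + 3 * k := by
  classical
  have := Fintype.ofFinite V
  have := Fintype.ofFinite (G.deleteEdges A).ConnectedComponent
  obtain ⟨col⟩ := hcol
  have hf : Function.Surjective (G.deleteEdges A).connectedComponentMk :=
    fun C => C.exists_rep
  obtain ⟨rep, hrep⟩ := hf.hasRightInverse
  have hclique : ∀ C C', C ≠ C' → col (rep C) = col (rep C') →
      ∃ d : G.Dart, (G.deleteEdges A).connectedComponentMk d.fst = C ∧
        (G.deleteEdges A).connectedComponentMk d.snd = C' := by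
    intro C C' hne hcolor
    have hrep_ne : rep C ≠ rep C' := fun h => hne (by rw [← hrep C, ← hrep C', h])
    exact ⟨⟨(rep C, rep C'), col.adj_of_compl_of_eq hrep_ne hcolor⟩, hrep C, hrep C'⟩
  rw [numComp, Nat.card_eq_fintype_card]
  have := four_mul_card_le_card_filter_ne hk (col ∘ rep)
    (hG.le_card_darts_leaving_of_surjective hf) hclique
  have := card_darts_crossing_le (G := G) A
  omega

end Components

/-- If `G` is a 3-edge-connected finite simple graph of order `n` that is not complete,
then `y_G ≤ min {⌊n/2⌋ - 1, ⌊3 χ(Gᶜ)/2⌋ - 1}`. -/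
theorem yMax_le_of_three_edgeConnected_not_complete {V : Type*} [Finite V]
    (G : SimpleGraph V) (hG : EdgeConnected G 3) (hnc : G ≠ ⊤)
    (n : ℕ) (hn : Nat.card V = n) :
    yMax G ≤ ((n / 2 : ℕ) : ℤ) - 1 ∧
    yMax G ≤ ((3 * (Gᶜ).chromaticNumber.toNat / 2 : ℕ) : ℤ) - 1 := by
  set k := (Gᶜ).chromaticNumber.toNat
  have hcol : Gᶜ.Colorable k := Gᶜ.colorable_chromaticNumber_of_fintype
  have hk : 2 ≤ k := by
    exact_mod_cast (two_le_chromaticNumber_iff_ne_bot.mpr (mt compl_eq_bot.mp hnc)).trans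
      hcol.chromaticNumber_le
  have hn4 : 3 < n := hn ▸ hG.lt_card
  have hbound (A : Set (Sym2 V)) :
      yVal G A ≤ ((n / 2 : ℕ) : ℤ) - 1 ∧ yVal G A ≤ ((3 * k / 2 : ℕ) : ℤ) - 1 := by
    have : Nonempty V := (Finite.one_lt_card_iff_nontrivial.mp hG.1).to_nonempty
    have hc1 : 1 ≤ numComp (G.deleteEdges A) := Nat.card_pos
    have hcn : numComp (G.deleteEdges A) ≤ n :=
      hn ▸ Nat.card_le_card_of_surjective _ fun C => C.exists_rep
    have hthree : numComp (G.deleteEdges A) = 1 ∨ 3 * numComp (G.deleteEdges A) ≤ 2 * A.ncard :=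
      (eq_or_lt_of_le hc1).imp Eq.symm (three_mul_numComp_deleteEdges_le hG A)
    have hfour := four_mul_numComp_deleteEdges_le hG A hk hcol
    rw [yVal]
    omega
  have hne : {y | ∃ A ⊆ G.edgeSet, yVal G A = y}.Nonempty := ⟨_, ∅, Set.empty_subset _, rfl⟩
  exact ⟨csSup_le hne fun _ ⟨A, _, hA⟩ => hA ▸ (hbound A).1,
    csSup_le hne fun _ ⟨A, _, hA⟩ => hA ▸ (hbound A).2⟩
end
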